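/- For every integer k ≥ 1 and every t ∈ [0,1], the identity k·φ⁺(1/k², t) − (2·φ⁺((k+1)/(2k), t) − 1) = k·t holds. Consequently, for every integer k ≥ 2 and every t ∈ (0,1), N_Γ(k,t) ≤ N_C(k,t), where N_Γ(k,t) = 2·φ⁺((k+1)/(2k), t) − 1 if t + (k+1)/(2k) < 1 and N_Γ(k,t) = 1 otherwise, and N_C(k,t) = k·φ⁺(1/k², t) if t + 1/k² < 1 and N_C(k,t) = k otherwise. -/

import Mathlib

noncomputable section

/-- φ⁺(s,t) = s + t − 2st + 2√(st(1−s)(1−t)). -/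
def phiPlus (s t : ℝ) : ℝ :=
  s + t - 2 * s * t + 2 * Real.sqrt (s * t * (1 - s) * (1 - t))

/-- φ⁻(s,t) = s + t − 2st − 2√(st(1−s)(1−t)). -/
def phiMinus (s t : ℝ) : ℝ :=
  s + t - 2 * s * t - 2 * Real.sqrt (s * t * (1 - s) * (1 - t))

end

/-!
Both `s = 1/K²` and `s = (K+1)/(2K)` have `s(1-s)` equal to `(K²-1)` divided by a square
(`K⁴` and `4K²`), so the square-root terms of `K·φ⁺(1/K², t)` and
`2φ⁺((K+1)/(2K), t) - 1` are the same multiple `2√((K²-1)t(1-t))/K`, and their difference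
is the polynomial `K t`. This gives the comparison when both norms are in their `φ⁺` regime;
since `1/K² ≤ (K+1)/(2K)`, the only other nontrivial regime is `1 - (K+1)/(2K) ≤ t < 1 - 1/K²`,
where `1 ≤ K·φ⁺(1/K², t)` reduces, after squaring, to a concave quadratic in `t` being
nonnegative between two points where it is.
-/

open Real

section

variable {K : ℝ} (t : ℝ)

lemma sq_mul_phiPlus_inv_sq (hK : K ≠ 0) :
    K ^ 2 * phiPlus (1 / K ^ 2) t =
      1 + (K ^ 2 - 2) * t + 2 * √((K ^ 2 - 1) * (t * (1 - t))) := by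
  have harg : 1 / K ^ 2 * t * (1 - 1 / K ^ 2) * (1 - t) =
      (K ^ 2 - 1) * (t * (1 - t)) / (K ^ 2) ^ 2 := by
    field_simp
  rw [phiPlus, harg, sqrt_div' _ (by positivity), sqrt_sq (sq_nonneg K)]
  field_simp
  ring

lemma mul_two_mul_phiPlus_sub_one (hK : 0 < K) :
    K * (2 * phiPlus ((K + 1) / (2 * K)) t - 1) =
      1 - 2 * t + 2 * √((K ^ 2 - 1) * (t * (1 - t))) := by
  have harg : (K + 1) / (2 * K) * t * (1 - (K + 1) / (2 * K)) * (1 - t) =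
      (K ^ 2 - 1) * (t * (1 - t)) / (2 * K) ^ 2 := by
    field_simp
    ring
  rw [phiPlus, harg, sqrt_div' _ (by positivity), sqrt_sq (by positivity)]
  field_simp
  ring

theorem mul_phiPlus_inv_sq_sub_two_mul_phiPlus (hK : 0 < K) :
    K * phiPlus (1 / K ^ 2) t - (2 * phiPlus ((K + 1) / (2 * K)) t - 1) = K * t := by
  apply mul_left_cancel₀ hK.ne'
  linear_combination sq_mul_phiPlus_inv_sq t hK.ne' - mul_two_mul_phiPlus_sub_one t hK

lemma le_one_add_mul_add_two_mul_sqrt (hK : 2 ≤ K) (ht : K - 1 ≤ 2 * K * t) (ht1 : t ≤ 1) :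
    K ≤ 1 + (K ^ 2 - 2) * t + 2 * √((K ^ 2 - 1) * (t * (1 - t))) := by
  have ht0 : 0 ≤ t := by nlinarith
  rcases le_or_gt (K - 1 - (K ^ 2 - 2) * t) 0 with h | h
  · nlinarith [sqrt_nonneg ((K ^ 2 - 1) * (t * (1 - t)))]
  · have hsq : ((K - 1 - (K ^ 2 - 2) * t) / 2) ^ 2 ≤ (K ^ 2 - 1) * (t * (1 - t)) := by
      nlinarith [mul_nonneg (sub_nonneg.2 ht) h.le, sq_nonneg (2 * K * t - (K - 1)),
        sq_nonneg (K - 2), mul_nonneg ht0 (sub_nonneg.2 ht1)]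
    linarith [le_sqrt_of_sq_le hsq]

lemma one_le_mul_phiPlus_inv_sq (hK : 2 ≤ K) (ht : 1 ≤ t + (K + 1) / (2 * K)) (ht1 : t ≤ 1) :
    1 ≤ K * phiPlus (1 / K ^ 2) t := by
  have hK0 : 0 < K := by linarith
  have ht' : K - 1 ≤ 2 * K * t := by
    have h := (le_div_iff₀ (by positivity : 0 < 2 * K)).1
      (by linarith : 1 - t ≤ (K + 1) / (2 * K))
    linarith
  have hsq : K ≤ K ^ 2 * phiPlus (1 / K ^ 2) t :=
    sq_mul_phiPlus_inv_sq t hK0.ne' ▸ le_one_add_mul_add_two_mul_sqrt t hK ht' ht1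
  nlinarith

lemma inv_sq_le_add_one_div_two_mul (hK : 1 ≤ K) : 1 / K ^ 2 ≤ (K + 1) / (2 * K) := by
  rw [div_le_div_iff₀ (by positivity) (by positivity)]
  nlinarith

theorem ptranspose_norm_le_choi_norm (hK : 2 ≤ K) (ht : 0 ≤ t) :
    (if t + (K + 1) / (2 * K) < 1 then 2 * phiPlus ((K + 1) / (2 * K)) t - 1 else 1) ≤
      (if t + 1 / K ^ 2 < 1 then K * phiPlus (1 / K ^ 2) t else K) := by
  have hK0 : 0 < K := by linarith
  have hs : 1 / K ^ 2 ≤ (K + 1) / (2 * K) := inv_sq_le_add_one_div_two_mul (by linarith)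
  split_ifs with hΓ hC hC
  · linarith [mul_phiPlus_inv_sq_sub_two_mul_phiPlus t hK0, mul_nonneg hK0.le ht]
  · linarith
  · exact one_le_mul_phiPlus_inv_sq t hK (not_lt.1 hΓ)
      (by linarith [one_div_nonneg.2 (sq_nonneg K)])
  · linarith

end

theorem norm_ptranspose_le_norm_choi :
    (∀ k : ℕ, 1 ≤ k → ∀ t ∈ Set.Icc (0 : ℝ) 1,
      (k : ℝ) * phiPlus (1 / (k : ℝ) ^ 2) t -
          (2 * phiPlus (((k : ℝ) + 1) / (2 * (k : ℝ))) t - 1) = (k : ℝ) * t) ∧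
    (∀ k : ℕ, 2 ≤ k → ∀ t ∈ Set.Ioo (0 : ℝ) 1,
      (if t + ((k : ℝ) + 1) / (2 * (k : ℝ)) < 1 then
          2 * phiPlus (((k : ℝ) + 1) / (2 * (k : ℝ))) t - 1
        else 1) ≤
      (if t + 1 / (k : ℝ) ^ 2 < 1 then (k : ℝ) * phiPlus (1 / (k : ℝ) ^ 2) t
        else (k : ℝ))) :=
  ⟨fun k hk t _ => mul_phiPlus_inv_sq_sub_two_mul_phiPlus t (by exact_mod_cast hk),
    fun k hk t ht => ptranspose_norm_le_choi_norm t (by exact_mod_cast hk) ht.1.le⟩
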